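/- arXiv:2112.04959 — 4 statements merged into one kernel-verified Lean document; each statement's English description precedes it below -/
import Mathlib

section
/- For every integer n and z, w on the unit circle, (Φⁿ(z) − Φⁿ(w)) ∧ (Φ⁻ⁿ(z) − Φ⁻ⁿ(w)) = 2i[(n+1)²|w^(n−1) − z^(n−1)|² − (n−1)²|w^(n+1) − z^(n+1)|²]. -/
open Complex

noncomputable def Phi (n : ℤ) (z : ℂ) : ℂ × ℂ :=
  (((n : ℂ) - 1) * z ^ (n + 1) * 1 + ((n : ℂ) + 1) * z ^ (n - 1) * 1,
   ((n : ℂ) - 1) * z ^ (n + 1) * (-I) + ((n : ℂ) + 1) * z ^ (n - 1) * I)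

def wedge (a b : ℂ × ℂ) : ℂ := a.1 * b.2 - a.2 * b.1

/-!
In the basis of isotropic vectors `(1, -i)`, `(1, i)` of `ℂ²`, whose wedge is `2i`, the vector
`Φⁿ(z)` has coordinates `((n-1) zⁿ⁺¹, (n+1) zⁿ⁻¹)`. On the unit circle `z⁻ᵐ = conj (zᵐ)`, so
`Φ⁻ⁿ(z)` has coordinates `(-(n+1) conj (zⁿ⁻¹), -(n-1) conj (zⁿ⁺¹))`: if `(p, q)` are the
coordinates of `Φⁿ(z) - Φⁿ(w)`, those of `Φ⁻ⁿ(z) - Φ⁻ⁿ(w)` are `(-conj q, -conj p)`, and the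
wedge of the two is `2i (|q|² - |p|²)`.
-/

open ComplexConjugate

noncomputable def isotropicComb (p q : ℂ) : ℂ × ℂ := p • (1, -I) + q • (1, I)

lemma isotropicComb_sub (p q r s : ℂ) :
    isotropicComb p q - isotropicComb r s = isotropicComb (p - r) (q - s) := by
  ext <;> simp [isotropicComb] <;> ring

lemma wedge_isotropicComb (p q r s : ℂ) :
    wedge (isotropicComb p q) (isotropicComb r s) = 2 * I * (p * s - q * r) := by
  simp only [wedge, isotropicComb, Prod.fst_add, Prod.snd_add, Prod.smul_fst, Prod.smul_snd,
    smul_eq_mul]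
  ring

lemma Phi_eq_isotropicComb (n : ℤ) (z : ℂ) :
    Phi n z = isotropicComb ((n - 1) * z ^ (n + 1)) ((n + 1) * z ^ (n - 1)) := by
  ext <;> simp [Phi, isotropicComb]

lemma zpow_neg_eq_conj_zpow {z : ℂ} (hz : ‖z‖ = 1) (m : ℤ) : z ^ (-m) = conj (z ^ m) := by
  rw [zpow_neg, inv_eq_conj (by rw [norm_zpow, hz, one_zpow])]

lemma Phi_neg_eq_isotropicComb {z : ℂ} (hz : ‖z‖ = 1) (n : ℤ) :
    Phi (-n) z =
      isotropicComb (-((n + 1) * conj (z ^ (n - 1)))) (-((n - 1) * conj (z ^ (n + 1)))) := by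
  have h₁ : -n + 1 = -(n - 1) := by ring
  have h₂ : -n - 1 = -(n + 1) := by ring
  rw [Phi_eq_isotropicComb, h₁, h₂, zpow_neg_eq_conj_zpow hz, zpow_neg_eq_conj_zpow hz]
  push_cast
  ring_nf

theorem stmt2 (n : ℤ) (z w : ℂ) (hz : ‖z‖ = 1) (hw : ‖w‖ = 1) :
    wedge (Phi n z - Phi n w) (Phi (-n) z - Phi (-n) w) =
      2 * I * (((n : ℂ) + 1) ^ 2 * ((‖w ^ (n - 1) - z ^ (n - 1)‖ : ℝ) : ℂ) ^ 2
        - ((n : ℂ) - 1) ^ 2 * ((‖w ^ (n + 1) - z ^ (n + 1)‖ : ℝ) : ℂ) ^ 2) := by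
  rw [Phi_eq_isotropicComb, Phi_eq_isotropicComb, Phi_neg_eq_isotropicComb hz,
    Phi_neg_eq_isotropicComb hw, isotropicComb_sub, isotropicComb_sub, wedge_isotropicComb,
    norm_sub_rev, norm_sub_rev (w ^ (n + 1)), ← mul_conj', ← mul_conj', map_sub, map_sub]
  ring
end

section
/- Let n = 2m+1 with m ∈ ℤ, and let ν be a Borel probability measure on 𝕊¹ with Fourier coefficients cₖ = ∫ w^{−k} dν. Then (1/(8i))·[∫ Φⁿ∘σ dν] ∧ [∫ Φ⁻ⁿ∘σ dν] = m²|c_{m+1}|² − (m+1)²|c_m|², where Φⁿ(σ(w)) = 2[m w^{m+1}(1,−i) + (m+1)w^m(1,i)] and Φ⁻ⁿ = conj(Φⁿ). -/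
/-!
Write `u = (1, -i)`, `v = (1, i)`, so that `Φⁿ(σ(w)) = 2m w^{m+1} u + 2(m+1) w^m v` and
`∫ Φⁿ∘σ dν = a u + b v` with `a = 2m ∫ w^{m+1} dν`, `b = 2(m+1) ∫ w^m dν`. Since `ū = v`, the
conjugate integral is `ā v + b̄ u`, and as `u ∧ u = v ∧ v = 0`, `u ∧ v = 2i = -(v ∧ u)`, the wedge
is `2i (|a|² - |b|²)`. On the unit circle `w^{-k} = conj (w^k)`, so `c_k = conj ∫ w^k dν` and
`|a|² = 4m² |c_{m+1}|²`, `|b|² = 4(m+1)² |c_m|²`.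
-/

open Complex MeasureTheory

/-- `Φ^{2m+1}(σ(w)) = 2[m w^{m+1}(1,−i) + (m+1)w^m(1,i)]` as a pair in `ℂ²`. -/
noncomputable def PhiOddSigma (m : ℤ) (w : ℂ) : ℂ × ℂ :=
  (2 * ((m : ℂ) * w ^ (m + 1) * 1 + ((m : ℂ) + 1) * w ^ m * 1),
   2 * ((m : ℂ) * w ^ (m + 1) * (-I) + ((m : ℂ) + 1) * w ^ m * I))

/-- Componentwise complex conjugate, giving `Φ^{-(2m+1)}∘σ = conj (Φ^{2m+1}∘σ)`. -/
noncomputable def conjPair (a : ℂ × ℂ) : ℂ × ℂ :=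
  ((starRingEnd ℂ) a.1, (starRingEnd ℂ) a.2)

lemma wedge_conjPair_smul_add_smul (a b : ℂ) :
    wedge (a • (1, -I) + b • (1, I)) (conjPair (a • (1, -I) + b • (1, I)))
      = 2 * I * (a * (starRingEnd ℂ) a - b * (starRingEnd ℂ) b) := by
  simp only [wedge, conjPair, Prod.fst_add, Prod.snd_add, Prod.smul_mk, smul_eq_mul, map_add,
    map_mul, map_neg, map_one, conj_I]
  ring

lemma integral_conjPair {α : Type*} [MeasurableSpace α] (μ : Measure α) (f : α → ℂ × ℂ) :
    ∫ x, conjPair (f x) ∂μ = conjPair (∫ x, f x ∂μ) :=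
  (conjCLE.prodCongr conjCLE).integral_comp_comm f

lemma phiOddSigma_eq_smul_add_smul (m : ℤ) (w : ℂ) :
    PhiOddSigma m w = (2 * m * w ^ (m + 1)) • (1, -I) + (2 * (m + 1) * w ^ m) • (1, I) := by
  ext <;> simp only [PhiOddSigma, Prod.fst_add, Prod.snd_add, Prod.smul_mk, smul_eq_mul] <;> ring

section UnitCircle

variable {μ : Measure ℂ}

lemma integrable_zpow_of_ae_norm_eq_one [IsFiniteMeasure μ] (h : ∀ᵐ w ∂μ, ‖w‖ = 1) (k : ℤ) :
    Integrable (fun w : ℂ ↦ w ^ k) μ :=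
  Integrable.of_bound (by fun_prop) 1 <| by
    filter_upwards [h] with w hw
    simp [norm_zpow, hw]

lemma integral_zpow_neg_of_ae_norm_eq_one (h : ∀ᵐ w ∂μ, ‖w‖ = 1) (k : ℤ) :
    ∫ w, w ^ (-k) ∂μ = (starRingEnd ℂ) (∫ w, w ^ k ∂μ) := by
  rw [← integral_conj]
  refine integral_congr_ae ?_
  filter_upwards [h] with w hw
  rw [zpow_neg, inv_eq_conj (by simp [norm_zpow, hw])]

lemma integral_phiOddSigma_of_ae_norm_eq_one [IsFiniteMeasure μ] (h : ∀ᵐ w ∂μ, ‖w‖ = 1)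
    (m : ℤ) :
    ∫ w, PhiOddSigma m w ∂μ = (2 * m * ∫ w, w ^ (m + 1) ∂μ) • (1, -I)
      + (2 * (m + 1) * ∫ w, w ^ m ∂μ) • (1, I) := by
  simp_rw [phiOddSigma_eq_smul_add_smul]
  rw [integral_add (((integrable_zpow_of_ae_norm_eq_one h _).const_mul _).smul_const _)
      (((integrable_zpow_of_ae_norm_eq_one h _).const_mul _).smul_const _),
    integral_smul_const, integral_smul_const, integral_const_mul, integral_const_mul]

end UnitCircle

theorem stmt15 (m : ℤ) (ν : Measure ℂ) [IsProbabilityMeasure ν]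
    (hsupp : ∀ᵐ w ∂ν, ‖w‖ = 1)
    (c : ℤ → ℂ) (hc : ∀ k : ℤ, c k = ∫ w, w ^ (-k) ∂ν) :
    (1 / (8 * I)) * wedge (∫ w, PhiOddSigma m w ∂ν) (∫ w, conjPair (PhiOddSigma m w) ∂ν)
      = ((m : ℂ) ^ 2 * (‖c (m + 1)‖ : ℂ) ^ 2
          - ((m : ℂ) + 1) ^ 2 * (‖c m‖ : ℂ) ^ 2) := by
  have hnorm (k : ℤ) : ‖c k‖ = ‖∫ w, w ^ k ∂ν‖ := by
    rw [hc, integral_zpow_neg_of_ae_norm_eq_one hsupp, RCLike.norm_conj]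
  rw [integral_conjPair, integral_phiOddSigma_of_ae_norm_eq_one hsupp,
    wedge_conjPair_smul_add_smul, hnorm, hnorm, ← mul_conj', ← mul_conj']
  simp only [map_mul, map_add, map_ofNat, map_intCast, map_one]
  field_simp
  ring
end

section
/- Let u : Ω → ℂ be a C¹ map on an open set Ω ⊆ ℝ², nowhere vanishing, and let v = u². Write v = v₁ + i v₂ and define ρ₁ = (1/4)[(v₁/|v| + 1)(∂₁v₂ − ∂₂v₁) − (v₂/|v|)(∂₁v₁ + ∂₂v₂)] and ρ₂ = (1/4)[(v₂/|v|)(∂₁v₂ − ∂₂v₁) + (v₁/|v| − 1)(∂₁v₁ + ∂₂v₂)]. Then at every point, (ρ₁, ρ₂) = (curl u)·(u₁, u₂), where curl u = ∂₁u₂ − ∂₂u₁. -/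
/-!
Write `u = u₁ + i u₂` and `v = u²`. The chain rule `dv = 2u du` expresses the partial
derivatives of `v₁ = u₁² - u₂²` and `v₂ = 2u₁u₂` through those of `u`, and `|v| = |u|²`
removes the square root. What remains is a pointwise identity between rational functions of
`u₁, u₂` and the four partials of `u`. At a zero of `u` both sides vanish, because `v` and
`dv` do (and `v / |v|` is read as `0`).
-/

/-- Partial derivative in the first coordinate direction. -/
noncomputable def pd1 (f : ℝ × ℝ → ℝ) (x : ℝ × ℝ) : ℝ := fderiv ℝ f x (1, 0)

/-- Partial derivative in the second coordinate direction. -/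
noncomputable def pd2 (f : ℝ × ℝ → ℝ) (x : ℝ × ℝ) : ℝ := fderiv ℝ f x (0, 1)

section SquareMap

variable {E : Type*} [NormedAddCommGroup E] [NormedSpace ℝ E] {f g : E → ℝ} {x : E}

theorem fderiv_sq_sub_sq_apply (hf : DifferentiableAt ℝ f x) (hg : DifferentiableAt ℝ g x)
    (e : E) :
    fderiv ℝ (fun y => f y ^ 2 - g y ^ 2) x e
      = 2 * (f x * fderiv ℝ f x e - g x * fderiv ℝ g x e) := by
  rw [fderiv_fun_sub (hf.fun_pow 2) (hg.fun_pow 2), fderiv_fun_pow 2 hf, fderiv_fun_pow 2 hg]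
  simp only [Nat.add_one_sub_one, pow_one, nsmul_eq_mul, Nat.cast_ofNat, sub_apply, smul_apply,
    smul_eq_mul]
  ring

theorem fderiv_two_mul_mul_apply (hf : DifferentiableAt ℝ f x) (hg : DifferentiableAt ℝ g x)
    (e : E) :
    fderiv ℝ (fun y => 2 * f y * g y) x e
      = 2 * (f x * fderiv ℝ g x e + g x * fderiv ℝ f x e) := by
  rw [fderiv_fun_mul (hf.const_mul 2) hg, fderiv_const_mul hf]
  simp only [add_apply, smul_apply, smul_eq_mul]
  ring

end SquareMap

theorem Real.sqrt_sq_sub_sq_sq_add_two_mul_mul_sq (a b : ℝ) :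
    √((a ^ 2 - b ^ 2) ^ 2 + (2 * a * b) ^ 2) = a ^ 2 + b ^ 2 := by
  rw [show (a ^ 2 - b ^ 2) ^ 2 + (2 * a * b) ^ 2 = (a ^ 2 + b ^ 2) ^ 2 by ring]
  exact Real.sqrt_sq (by positivity)

section Algebra

/- `a, b` stand for `u₁, u₂` and `aᵢ, bᵢ` for `∂ᵢu₁, ∂ᵢu₂` at a point. -/
variable (a b a₁ a₂ b₁ b₂ : ℝ)

theorem rho_fst_eq_curl_mul :
    1 / 4 * (((a ^ 2 - b ^ 2) / (a ^ 2 + b ^ 2) + 1)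
        * (2 * (a * b₁ + b * a₁) - 2 * (a * a₂ - b * b₂))
      - 2 * a * b / (a ^ 2 + b ^ 2) * (2 * (a * a₁ - b * b₁) + 2 * (a * b₂ + b * a₂)))
      = (b₁ - a₂) * a := by
  rcases eq_or_ne (a ^ 2 + b ^ 2) 0 with h | h
  · obtain ⟨rfl, rfl⟩ := mul_self_add_mul_self_eq_zero.mp (by simpa only [sq] using h)
    simp
  · field_simp
    ring

theorem rho_snd_eq_curl_mul :
    1 / 4 * (2 * a * b / (a ^ 2 + b ^ 2)
        * (2 * (a * b₁ + b * a₁) - 2 * (a * a₂ - b * b₂))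
      + ((a ^ 2 - b ^ 2) / (a ^ 2 + b ^ 2) - 1)
        * (2 * (a * a₁ - b * b₁) + 2 * (a * b₂ + b * a₂)))
      = (b₁ - a₂) * b := by
  rcases eq_or_ne (a ^ 2 + b ^ 2) 0 with h | h
  · obtain ⟨rfl, rfl⟩ := mul_self_add_mul_self_eq_zero.mp (by simpa only [sq] using h)
    simp
  · field_simp
    ring

end Algebra

theorem stmt17_general (Ω : Set (ℝ × ℝ)) (hΩ : IsOpen Ω) (u₁ u₂ : ℝ × ℝ → ℝ)
    (hu : ContDiffOn ℝ 1 (fun x => (u₁ x, u₂ x)) Ω)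
    (v₁ v₂ : ℝ × ℝ → ℝ)
    (hv₁ : v₁ = fun x => u₁ x ^ 2 - u₂ x ^ 2)
    (hv₂ : v₂ = fun x => 2 * u₁ x * u₂ x) :
    ∀ x ∈ Ω,
      ((1 / 4) * ((v₁ x / Real.sqrt (v₁ x ^ 2 + v₂ x ^ 2) + 1) * (pd1 v₂ x - pd2 v₁ x)
          - (v₂ x / Real.sqrt (v₁ x ^ 2 + v₂ x ^ 2)) * (pd1 v₁ x + pd2 v₂ x)),
       (1 / 4) * ((v₂ x / Real.sqrt (v₁ x ^ 2 + v₂ x ^ 2)) * (pd1 v₂ x - pd2 v₁ x)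
          + (v₁ x / Real.sqrt (v₁ x ^ 2 + v₂ x ^ 2) - 1) * (pd1 v₁ x + pd2 v₂ x)))
      = ((pd1 u₂ x - pd2 u₁ x) * u₁ x, (pd1 u₂ x - pd2 u₁ x) * u₂ x) := by
  intro x hx
  have hdu : DifferentiableAt ℝ (fun x => (u₁ x, u₂ x)) x :=
    (hu.contDiffAt (hΩ.mem_nhds hx)).differentiableAt one_ne_zero
  have h₁ : DifferentiableAt ℝ u₁ x := hdu.fst
  have h₂ : DifferentiableAt ℝ u₂ x := hdu.snd
  subst hv₁ hv₂
  simp only [pd1, pd2, fderiv_sq_sub_sq_apply h₁ h₂, fderiv_two_mul_mul_apply h₁ h₂,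
    Real.sqrt_sq_sub_sq_sq_add_two_mul_mul_sq]
  exact Prod.ext (rho_fst_eq_curl_mul ..) (rho_snd_eq_curl_mul ..)

theorem stmt17 (Ω : Set (ℝ × ℝ)) (hΩ : IsOpen Ω) (u₁ u₂ : ℝ × ℝ → ℝ)
    (hu : ContDiffOn ℝ 1 (fun x => (u₁ x, u₂ x)) Ω)
    (hne : ∀ x ∈ Ω, ¬(u₁ x = 0 ∧ u₂ x = 0))
    (v₁ v₂ : ℝ × ℝ → ℝ)
    (hv₁ : v₁ = fun x => u₁ x ^ 2 - u₂ x ^ 2)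
    (hv₂ : v₂ = fun x => 2 * u₁ x * u₂ x) :
    ∀ x ∈ Ω,
      ((1 / 4) * ((v₁ x / Real.sqrt (v₁ x ^ 2 + v₂ x ^ 2) + 1) * (pd1 v₂ x - pd2 v₁ x)
          - (v₂ x / Real.sqrt (v₁ x ^ 2 + v₂ x ^ 2)) * (pd1 v₁ x + pd2 v₂ x)),
       (1 / 4) * ((v₂ x / Real.sqrt (v₁ x ^ 2 + v₂ x ^ 2)) * (pd1 v₂ x - pd2 v₁ x)
          + (v₁ x / Real.sqrt (v₁ x ^ 2 + v₂ x ^ 2) - 1) * (pd1 v₁ x + pd2 v₂ x)))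
      = ((pd1 u₂ x - pd2 u₁ x) * u₁ x, (pd1 u₂ x - pd2 u₁ x) * u₂ x) :=
  stmt17_general Ω hΩ u₁ u₂ hu v₁ v₂ hv₁ hv₂
end

section
/- Let B be the open unit disk in ℝ² and fix an angle β ∈ (0, π/2]. Suppose L₋ and L₊ are two line segments obtained as intersections with the disk of radius 2 of two lines making angles −β/2 and β/2 with a fixed direction, which intersect only outside the disk of radius 2. Then for any points x₋ ∈ L₋ ∩ B and x₊ ∈ L₊ ∩ B, |x₋ − x₊| ≥ 2 sin(β/2). -/
/-!
The two lines meet at a point `z₀` with `‖z₀‖ > 2`, so a point of either line inside the unit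
disk is `z₀ + a • d` with `d` the unit direction of that line and `|a| ≥ 1`. For unit vectors
`d₁, d₂` with `⟪d₁, d₂⟫ = cos β ≥ 0` and `|a|, |b| ≥ 1`, the square `a² + b² - 2ab cos β` of
`‖a • d₁ - b • d₂‖` is at least `2` when `ab ≤ 0` and equals `(a - b)² + 2ab(1 - cos β)` otherwise,
so in both cases it dominates `‖d₁ - d₂‖² = 2 - 2 cos β = (2 sin (β/2))²`.
-/

open Complex Real

open scoped ComplexConjugate RealInnerProductSpace

theorem one_le_abs_of_norm_add_smul_lt_one {E : Type*} [NormedAddCommGroup E] [NormedSpace ℝ E]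
    {z d : E} {a : ℝ} (hd : ‖d‖ = 1) (hz : 2 < ‖z‖) (h : ‖z + a • d‖ < 1) : 1 ≤ |a| := by
  have := norm_sub_norm_le z (z + a • d)
  rw [sub_add_cancel_left, norm_neg, norm_smul, hd, mul_one, Real.norm_eq_abs] at this
  linarith

theorem norm_sub_le_norm_smul_sub_smul {E : Type*} [NormedAddCommGroup E] [InnerProductSpace ℝ E]
    {d₁ d₂ : E} (hd₁ : ‖d₁‖ = 1) (hd₂ : ‖d₂‖ = 1) (hinner : 0 ≤ ⟪d₁, d₂⟫) {a b : ℝ} (ha : 1 ≤ |a|) (hb : 1 ≤ |b|) :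
    ‖d₁ - d₂‖ ≤ ‖a • d₁ - b • d₂‖ := by
  have expand : ∀ a b : ℝ, ‖a • d₁ - b • d₂‖ ^ 2 = a ^ 2 + b ^ 2 - 2 * (a * b) * ⟪d₁, d₂⟫ := by
    intro a b
    rw [norm_sub_sq_real, norm_smul, norm_smul, hd₁, hd₂, inner_smul_left, inner_smul_right]
    simp only [Real.norm_eq_abs, mul_one, sq_abs, conj_trivial]
    ring
  have hinner_le : ⟪d₁, d₂⟫ ≤ 1 := by
    simpa [hd₁, hd₂] using real_inner_le_norm d₁ d₂
  have ha2 : 1 ≤ a ^ 2 := by nlinarith [sq_abs a, abs_nonneg a]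
  have hb2 : 1 ≤ b ^ 2 := by nlinarith [sq_abs b, abs_nonneg b]
  rw [← pow_le_pow_iff_left₀ (norm_nonneg _) (norm_nonneg _) two_ne_zero]
  have h1 := expand 1 1
  simp only [one_smul] at h1
  rw [h1, expand a b]
  rcases le_or_gt (a * b) 0 with hab | hab
  · nlinarith [mul_nonneg (neg_nonneg.2 hab) hinner]
  · have hab1 : 1 ≤ a * b := by
      have : 1 ≤ |a * b| := by rw [abs_mul]; nlinarith
      rwa [abs_of_pos hab] at this
    nlinarith [sq_nonneg (a - b), mul_nonneg (sub_nonneg.2 hab1) (sub_nonneg.2 hinner_le)]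

theorem exists_ofReal_mul_sub_ofReal_mul_eq {d₁ d₂ : ℂ} (h : (d₁ * conj d₂).im ≠ 0) (w : ℂ) :
    ∃ t s : ℝ, (t : ℂ) * d₁ - (s : ℂ) * d₂ = w := by
  refine ⟨(w * conj d₂).im / (d₁ * conj d₂).im, (w * conj d₁).im / (d₁ * conj d₂).im, ?_⟩
  have cramer : ((w * conj d₂).im : ℂ) * d₁ - ((w * conj d₁).im : ℂ) * d₂
      = ((d₁ * conj d₂).im : ℂ) * w := by
    apply Complex.ext <;> simp only [mul_im, mul_re, sub_re, sub_im, ofReal_re, ofReal_im,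
      conj_re, conj_im] <;> ring
  have h' : ((d₁ * conj d₂).im : ℂ) ≠ 0 := ofReal_ne_zero.2 h
  rw [ofReal_div, ofReal_div, div_mul_eq_mul_div, div_mul_eq_mul_div, div_sub_div_same, cramer,
    mul_div_cancel_left₀ _ h']

theorem exp_mul_I_mul_conj_exp_mul_I (θ₁ θ₂ : ℝ) :
    exp (θ₁ * I) * conj (exp (θ₂ * I)) = exp ((θ₁ - θ₂ : ℝ) * I) := by
  rw [← exp_conj, ← Complex.exp_add, map_mul, conj_ofReal, conj_I]
  push_cast
  ring_nf

theorem real_inner_exp_mul_I (θ₁ θ₂ : ℝ) :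
    ⟪exp (θ₁ * I), exp (θ₂ * I)⟫ = Real.cos (θ₂ - θ₁) := by
  rw [Complex.inner, exp_mul_I_mul_conj_exp_mul_I, exp_ofReal_mul_I_re]

theorem norm_exp_mul_I_sub_exp_mul_I (θ₁ θ₂ : ℝ) :
    ‖exp (θ₂ * I) - exp (θ₁ * I)‖ = |2 * Real.sin ((θ₂ - θ₁) / 2)| := by
  have : exp (θ₂ * I) - exp (θ₁ * I) = exp (θ₁ * I) * (exp (I * (θ₂ - θ₁ : ℝ)) - 1) := by
    rw [mul_sub, mul_one, ← Complex.exp_add]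
    push_cast
    ring_nf
  rw [this, norm_mul, norm_exp_ofReal_mul_I, one_mul, norm_exp_I_mul_ofReal_sub_one,
    Real.norm_eq_abs]

/-- Two chords of the disk of radius 2, lying on lines making angles `±β/2` with a fixed
direction `e^{iα}`, whose underlying lines meet only outside the closed disk of radius 2:
any two points of the chords lying in the unit disk are at distance at least `2 sin(β/2)`. -/
theorem stmt18 (β : ℝ) (hβ₀ : 0 < β) (hβ₁ : β ≤ π / 2) (α : ℝ) (pm pp : ℂ)
    (lineM lineP : Set ℂ)
    (hlineM : lineM = {z : ℂ | ∃ t : ℝ, z = pm + (t : ℂ) * Complex.exp ((α - β / 2 : ℝ) * I)})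
    (hlineP : lineP = {z : ℂ | ∃ t : ℝ, z = pp + (t : ℂ) * Complex.exp ((α + β / 2 : ℝ) * I)})
    (hint : ∀ z ∈ lineM, z ∈ lineP → 2 < ‖z‖) :
    ∀ xm ∈ lineM, ∀ xp ∈ lineP, ‖xm‖ < 1 → ‖xp‖ < 1 →
      2 * Real.sin (β / 2) ≤ ‖xm - xp‖ := by
  subst hlineM hlineP
  rintro _ ⟨u, rfl⟩ _ ⟨v, rfl⟩ hxm hxp
  set d₁ := exp ((α - β / 2 : ℝ) * I)
  set d₂ := exp ((α + β / 2 : ℝ) * I)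
  have hd₁ : ‖d₁‖ = 1 := norm_exp_ofReal_mul_I _
  have hd₂ : ‖d₂‖ = 1 := norm_exp_ofReal_mul_I _
  have not_parallel : (d₁ * conj d₂).im ≠ 0 := by
    rw [exp_mul_I_mul_conj_exp_mul_I, exp_ofReal_mul_I_im, show α - β / 2 - (α + β / 2) = -β by
      ring, Real.sin_neg, neg_ne_zero]
    exact (Real.sin_pos_of_pos_of_lt_pi hβ₀ (by linarith [Real.pi_pos])).ne'
  obtain ⟨t, s, hts⟩ := exists_ofReal_mul_sub_ofReal_mul_eq not_parallel (pp - pm)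
  set z₀ := pm + t * d₁
  have hz₀ : z₀ = pp + s * d₂ := by linear_combination hts
  have hfar : 2 < ‖z₀‖ := hint z₀ ⟨t, rfl⟩ ⟨s, hz₀⟩
  have hxm' : pm + u * d₁ = z₀ + (u - t) • d₁ := by
    rw [Complex.real_smul]; push_cast; ring
  have hxp' : pp + v * d₂ = z₀ + (v - s) • d₂ := by
    rw [hz₀, Complex.real_smul]; push_cast; ring
  calc 2 * Real.sin (β / 2) = ‖d₁ - d₂‖ := by
        rw [norm_sub_rev, norm_exp_mul_I_sub_exp_mul_I, show (α + β / 2 - (α - β / 2)) / 2 = β / 2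
          by ring, abs_of_nonneg]
        exact mul_nonneg zero_le_two (Real.sin_nonneg_of_nonneg_of_le_pi (by linarith)
          (by linarith [Real.pi_pos]))
    _ ≤ ‖(u - t) • d₁ - (v - s) • d₂‖ := by
        refine norm_sub_le_norm_smul_sub_smul hd₁ hd₂ ?_ ?_ ?_
        · rw [real_inner_exp_mul_I]
          exact Real.cos_nonneg_of_mem_Icc ⟨by linarith, by linarith⟩
        · exact one_le_abs_of_norm_add_smul_lt_one hd₁ hfar (hxm' ▸ hxm)
        · exact one_le_abs_of_norm_add_smul_lt_one hd₂ hfar (hxp' ▸ hxp)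
    _ = ‖pm + u * d₁ - (pp + v * d₂)‖ := by rw [hxm', hxp', add_sub_add_left_eq_sub]
end
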